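/- arXiv:2605.07584 — 2 statements merged into one kernel-verified Lean document; each statement's English description precedes it below -/
import Mathlib

section
/- (Soundness of Δ-edge anchored clique enumeration) Let R_i be a rule stratum, t ≥ 0, and r ∈ R_i a rule whose arity is at least 2 and all of whose body literals have arity at most 2. If C is a k-clique in the substitution consistency graph G(r, J_i^t) (one vertex per variable of r) that contains at least one Δ-edge from ΔE_{i,r}^t, then the corresponding ground rule r̄ satisfies r̄ ∈ gr({r}, J_i^t) and B(r̄) ∩ Δ_i^t ≠ ∅. -/
namespace Planning

/-- A term is either a variable or an object (constant). -/
inductive Term (V O : Type) : Type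
  | var : V → Term V O
  | obj : O → Term V O
  deriving DecidableEq

/-- An atom is a predicate symbol applied to a list of terms. -/
structure Atom (P V O : Type) : Type where
  pred : P
  args : List (Term V O)

variable {P V O : Type}

def Term.isObj : Term V O → Prop
  | .var _ => False
  | .obj _ => True

/-- A ground atom mentions no variables. -/
def Atom.isGround (a : Atom P V O) : Prop := ∀ t ∈ a.args, t.isObj

/-- The (finite) set of variables occurring in an atom; its card is the arity of the literal. -/
def Atom.vars [DecidableEq V] (a : Atom P V O) : Finset V :=
  (a.args.filterMap fun t => match t with
    | Term.var v => some v
    | Term.obj _ => none).toFinset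

/-- Two terms match iff one of them is a variable, or they are equal objects. -/
def Term.Matches : Term V O → Term V O → Prop
  | .var _, _ => True
  | _, .var _ => True
  | .obj o, .obj o' => o = o'

/-- `P(x_1,...,x_n)` matches `P'(x'_1,...,x'_n)` iff `P = P'` and each pair of
corresponding terms matches. -/
def Atom.Matches (a b : Atom P V O) : Prop :=
  a.pred = b.pred ∧ List.Forall₂ Term.Matches a.args b.args

/-- Apply a partial substitution to a term. -/
def Term.subst (σ : V → Option O) : Term V O → Term V O
  | .var v => match σ v with
    | some o => .obj o
    | none => .var v
  | .obj o => .obj o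

/-- Apply a partial substitution to an atom. -/
def Atom.subst (σ : V → Option O) (a : Atom P V O) : Atom P V O :=
  ⟨a.pred, a.args.map (Term.subst σ)⟩

/-- Apply a total substitution `ρ`, yielding the ground atom `a[ρ]`. -/
def Atom.ground (ρ : V → O) (a : Atom P V O) : Atom P V O :=
  a.subst (fun v => some (ρ v))

/-- The partial substitution `[v, v']` induced by two vertices `v = x/o`, `v' = x'/o'`. -/
def pairSub [DecidableEq V] (v v' : V × O) : V → Option O :=
  fun x => if x = v.1 then some v.2 else if x = v'.1 then some v'.2 else none

/-- The partial substitution `[v]` induced by a single vertex `v = x/o`. -/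
def singleSub [DecidableEq V] (v : V × O) : V → Option O :=
  fun x => if x = v.1 then some v.2 else none

/-- An action schema (also used for the body of a Datalog rule): a finite set of
variables `X(a)`, positive precondition atoms and negative precondition atoms. -/
structure Schema (P V O : Type) : Type where
  vars : Finset V
  prePos : Set (Atom P V O)
  preNeg : Set (Atom P V O)

/-- The arity of a schema is `|X(a)|`. -/
def Schema.arity (a : Schema P V O) : ℕ := a.vars.card

/-- `x/o` is a vertex-consistent substitution: the single-vertex analogue of the
edge removal criteria. -/
def consistentVertex [DecidableEq V] (a : Schema P V O) (s : Set (Atom P V O))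
    (v : V × O) : Prop :=
  v.1 ∈ a.vars ∧
  (∀ p ∈ a.prePos, ∃ q ∈ s, (p.subst (singleSub v)).Matches q) ∧
  (∀ p ∈ a.preNeg, p.subst (singleSub v) ∉ s)

/-- `{v, v'}` is an edge of the substitution consistency graph `G_{a,s}`:
the pair is excluded neither by `I^≠` (two objects for one variable), nor by `I^+`
(some positive precondition atom, after applying `[v,v']`, matches no ground atom
of `s`), nor by `I^-` (some negative precondition atom, after applying `[v,v']`,
yields a ground atom contained in `s`). -/
def consistentEdge [DecidableEq V] (a : Schema P V O) (s : Set (Atom P V O))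
    (v v' : V × O) : Prop :=
  v.1 ∈ a.vars ∧ v'.1 ∈ a.vars ∧
  (v.1 = v'.1 → v.2 = v'.2) ∧
  (∀ p ∈ a.prePos, ∃ q ∈ s, (p.subst (pairSub v v')).Matches q) ∧
  (∀ p ∈ a.preNeg, p.subst (pairSub v v') ∉ s)

/-- The vertex set `{x/ρ(x) | x ∈ X(a)}` (exactly one vertex per variable of `a`)
is a `k`-clique of the substitution consistency graph `G_{a,s}`. -/
def IsCliqueOf [DecidableEq V] (a : Schema P V O) (s : Set (Atom P V O))
    (ρ : V → O) : Prop :=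
  ∀ x ∈ a.vars, ∀ x' ∈ a.vars, x ≠ x' → consistentEdge a s (x, ρ x) (x', ρ x')

/-- All ground precondition (resp. body) literals obtained by applying `ρ` hold in `s`:
positive ground atoms are in `s`, negative ground atoms are not in `s`. -/
def Applicable (a : Schema P V O) (s : Set (Atom P V O)) (ρ : V → O) : Prop :=
  (∀ p ∈ a.prePos, p.ground ρ ∈ s) ∧ (∀ p ∈ a.preNeg, p.ground ρ ∉ s)

/-- A Datalog rule: a head atom and a body (a set of positive and negative literals
over the rule's variables). -/
structure Rule (P V O : Type) : Type where
  head : Atom P V O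
  body : Schema P V O

end Planning


namespace Planning

variable {P V O : Type} [DecidableEq V]

lemma mem_vars_iff {a : Atom P V O} {v : V} :
    v ∈ a.vars ↔ Term.var v ∈ a.args := by
  simp only [Atom.vars, List.mem_toFinset, List.mem_filterMap]
  constructor
  · rintro ⟨t, ht, h⟩
    cases t with
    | var w => simp at h; subst h; exact ht
    | obj o => simp at h
  · intro h
    exact ⟨Term.var v, h, rfl⟩

lemma subst_eq_ground {a : Atom P V O} {σ : V → Option O} {ρ : V → O}
    (h : ∀ v ∈ a.vars, σ v = some (ρ v)) : a.subst σ = a.ground ρ := by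
  unfold Atom.ground Atom.subst
  congr 1
  apply List.map_congr_left
  intro t ht
  cases t with
  | var w =>
      have hw : σ w = some (ρ w) := h w (mem_vars_iff.mpr ht)
      simp [Term.subst, hw]
  | obj o => rfl

lemma forall2_map_map {α β γ : Type*} {R : β → γ → Prop} {f : α → β} {g : α → γ}
    (l : List α) (h : ∀ x ∈ l, R (f x) (g x)) :
    List.Forall₂ R (l.map f) (l.map g) := by
  induction l with
  | nil => simp
  | cons a t ih =>
      simp only [List.map_cons, List.forall₂_cons]
      exact ⟨h a (by simp), ih fun x hx => h x (by simp [hx])⟩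

lemma subst_matches_ground {a : Atom P V O} {σ : V → Option O} {ρ : V → O}
    (h : ∀ v, σ v = none ∨ σ v = some (ρ v)) :
    (a.subst σ).Matches (a.ground ρ) := by
  refine ⟨rfl, ?_⟩
  apply forall2_map_map
  intro t _
  cases t with
  | var w =>
      rcases h w with hw | hw <;> simp [Term.subst, hw, Term.Matches]
  | obj o => simp [Term.subst, Term.Matches]

lemma ground_isGround (a : Atom P V O) (ρ : V → O) : (a.ground ρ).isGround := by
  intro t ht
  simp only [Atom.ground, Atom.subst, List.mem_map] at ht
  obtain ⟨s, _, rfl⟩ := ht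
  cases s <;> simp [Term.subst, Term.isObj]

lemma ground_args_eq {l₁ l₂ : List (Term V O)}
    (h : List.Forall₂ Term.Matches l₁ l₂)
    (h₁ : ∀ t ∈ l₁, t.isObj) (h₂ : ∀ t ∈ l₂, t.isObj) : l₁ = l₂ := by
  induction h with
  | nil => rfl
  | @cons a b t₁ t₂ hab htl ih =>
      have ha := h₁ a (by simp)
      have hb := h₂ b (by simp)
      cases a with
      | var v => exact absurd ha (by simp [Term.isObj])
      | obj o =>
        cases b with
        | var v => exact absurd hb (by simp [Term.isObj])
        | obj o' =>
          have hoo : o = o' := hab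
          subst hoo
          rw [ih (fun t ht => h₁ t (by simp [ht])) (fun t ht => h₂ t (by simp [ht]))]

lemma ground_matches_eq {a b : Atom P V O} (ha : a.isGround) (hb : b.isGround)
    (h : a.Matches b) : a = b := by
  obtain ⟨pa, la⟩ := a
  obtain ⟨pb, lb⟩ := b
  obtain ⟨hp, hargs⟩ := h
  cases hp
  rw [Atom.mk.injEq]
  exact ⟨rfl, ground_args_eq hargs ha hb⟩

end Planning

open Planning in
/-- Soundness of Δ-edge anchored clique enumeration.
Let `Jold = J_i^{t-1} ⊆ Jnew = J_i^t` be the fact sets of two consecutive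
semi-naive iterations (so `Δ_i^t = Jnew \ Jold`), and let `r` be a rule of
arity at least `2` all of whose body literals have arity at most `2`.
If `{x/ρ(x) | x ∈ X(r)}` is a `k`-clique in `G(r, J_i^t)` (one vertex per
variable of `r`) containing at least one Δ-edge from `ΔE_{i,r}^t`, then the
corresponding ground rule `r̄` satisfies `r̄ ∈ gr({r}, J_i^t)` (its body is
applicable in `J_i^t`) and `B(r̄) ∩ Δ_i^t ≠ ∅`. -/
theorem soundness_of_delta_edge_anchored_enumeration
    {P V O : Type} [DecidableEq V]
    (r : Rule P V O) (Jold Jnew : Set (Atom P V O))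
    (hsub : Jold ⊆ Jnew)
    (hground : ∀ q ∈ Jnew, q.isGround)
    (hbodyvars : ∀ p ∈ r.body.prePos ∪ r.body.preNeg, p.vars ⊆ r.body.vars)
    (hk : 2 ≤ r.body.arity)
    (harity : ∀ p ∈ r.body.prePos ∪ r.body.preNeg, p.vars.card ≤ 2)
    (ρ : V → O)
    (hclique : IsCliqueOf r.body Jnew ρ)
    (hdeltaedge : ∃ x ∈ r.body.vars, ∃ x' ∈ r.body.vars, x ≠ x' ∧
      consistentEdge r.body Jnew (x, ρ x) (x', ρ x') ∧
      ¬ consistentEdge r.body Jold (x, ρ x) (x', ρ x')) :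
    Applicable r.body Jnew ρ ∧ ∃ p ∈ r.body.prePos, p.ground ρ ∈ Jnew \ Jold := by
    classical
  obtain ⟨x, hx, x', hx', hne, hedgeN, hnotO⟩ := hdeltaedge
  -- choose for each small body atom a covering pair of clique vertices
  have pick : ∀ p ∈ r.body.prePos ∪ r.body.preNeg,
      ∃ y y', y ∈ r.body.vars ∧ y' ∈ r.body.vars ∧ y ≠ y' ∧
        ∀ v ∈ p.vars, pairSub (y, ρ y) (y', ρ y') v = some (ρ v) := by
    intro p hp
    obtain ⟨u, hsu, hut, hcard⟩ :=
      Finset.exists_subsuperset_card_eq (hbodyvars p hp) (harity p hp) hk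
    obtain ⟨y, y', hyy, rfl⟩ := Finset.card_eq_two.mp hcard
    refine ⟨y, y', hut (by simp), hut (by simp), hyy, ?_⟩
    intro v hv
    have hv2 := hsu hv
    simp only [Finset.mem_insert, Finset.mem_singleton] at hv2
    rcases hv2 with rfl | rfl
    · simp [pairSub]
    · simp [pairSub, Ne.symm hyy]
  have happ : Applicable r.body Jnew ρ := by
    constructor
    · intro p hp
      obtain ⟨y, y', hy, hy', hyy, hσ⟩ := pick p (Or.inl hp)
      have hc := hclique y hy y' hy' hyy
      obtain ⟨q, hq, hm⟩ := hc.2.2.2.1 p hp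
      rw [subst_eq_ground hσ] at hm
      have := ground_matches_eq (ground_isGround p ρ) (hground q hq) hm
      rwa [this]
    · intro p hp
      obtain ⟨y, y', hy, hy', hyy, hσ⟩ := pick p (Or.inr hp)
      have hc := hclique y hy y' hy' hyy
      have hn := hc.2.2.2.2 p hp
      rwa [subst_eq_ground hσ] at hn
  refine ⟨happ, ?_⟩
  by_cases hD : ∀ p ∈ r.body.prePos,
      ∃ q ∈ Jold, (p.subst (pairSub (x, ρ x) (x', ρ x'))).Matches q
  · exfalso
    have hE : ∃ p ∈ r.body.preNeg, p.subst (pairSub (x, ρ x) (x', ρ x')) ∈ Jold := by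
      by_contra hE
      push_neg at hE
      exact hnotO ⟨hx, hx', fun h => absurd h hne, hD, hE⟩
    obtain ⟨p, hp, hmem⟩ := hE
    exact hedgeN.2.2.2.2 p hp (hsub hmem)
  · push_neg at hD
    obtain ⟨p, hp, hno⟩ := hD
    refine ⟨p, hp, happ.1 p hp, fun hmem => ?_⟩
    refine hno (p.ground ρ) hmem (subst_matches_ground fun v => ?_)
    by_cases h1 : v = x
    · subst h1; right; simp [pairSub]
    · by_cases h2 : v = x'
      · subst h2; right; simp [pairSub, h1]
      · left; simp [pairSub, h1, h2]
end

section
/- Let a be an action schema and s a state, and let x, x' be two distinct variables of a with {x,x'} not an edge of the variable dependency graph G_a. Let x/o and x/o' be two vertex-consistent substitutions for the same variable x. Then for every vertex-consistent substitution x'/o'' it holds that {x/o, x'/o''} is an edge of the substitution consistency graph G_{a,s} if and only if {x/o', x'/o''} is an edge of G_{a,s}. -/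
open Planning in
lemma Planning.Atom.subst_congr' {P V O : Type} [DecidableEq V]
    (p : Atom P V O) (σ τ : V → Option O)
    (h : ∀ v ∈ p.vars, σ v = τ v) : p.subst σ = p.subst τ := by
  unfold Atom.subst
  congr 1
  apply List.map_congr_left
  intro t ht
  cases t with
  | obj o => rfl
  | var v =>
    have hv : v ∈ p.vars := by
      simp only [Atom.vars, List.mem_toFinset, List.mem_filterMap]
      exact ⟨Term.var v, ht, rfl⟩
    simp [Term.subst, h v hv]

open Planning in
/-- Corollary of Statement 6. Let `a` be an action schema,
`s` a state, and `x ≠ x'` two variables of `a` with `{x, x'}` not an edge of the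
variable dependency graph `G_a` (no precondition literal mentions both). Let
`x/o` and `x/o'` be two vertex-consistent substitutions for the same variable
`x`. Then for every vertex-consistent substitution `x'/o''`, `{x/o, x'/o''}` is
an edge of `G_{a,s}` iff `{x/o', x'/o''}` is an edge of `G_{a,s}`. -/
theorem adjacency_independent_of_object_choice
    {P V O : Type} [DecidableEq V]
    (a : Schema P V O) (s : Set (Atom P V O))
    (hground : ∀ q ∈ s, q.isGround)
    {x x' : V} (hx : x ∈ a.vars) (hx' : x' ∈ a.vars) (hne : x ≠ x')
    (hnodep : ∀ p ∈ a.prePos ∪ a.preNeg, ¬ (x ∈ p.vars ∧ x' ∈ p.vars))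
    {o o' : O}
    (hv : consistentVertex a s (x, o))
    (hv' : consistentVertex a s (x, o')) :
    ∀ o'' : O, consistentVertex a s (x', o'') →
      (consistentEdge a s (x, o) (x', o'') ↔
        consistentEdge a s (x, o') (x', o'')) := by
  intro o'' hv''
  have key : ∀ oo : O, consistentVertex a s (x, oo) →
      consistentEdge a s (x, oo) (x', o'') := by
    intro oo hvo
    have subst_eq : ∀ p : Atom P V O, ¬(x ∈ p.vars ∧ x' ∈ p.vars) →
        p.subst (pairSub (x, oo) (x', o'')) = p.subst (singleSub (x', o'')) ∨
        p.subst (pairSub (x, oo) (x', o'')) = p.subst (singleSub (x, oo)) := by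
      intro p hp
      by_cases hxp : x ∈ p.vars
      · right
        apply Atom.subst_congr'
        intro v hvp
        simp only [pairSub, singleSub]
        by_cases h1 : v = x
        · simp [h1]
        · have h2 : v ≠ x' := fun h => hp ⟨hxp, h ▸ hvp⟩
          simp [h1, h2]
      · left
        apply Atom.subst_congr'
        intro v hvp
        have h1 : v ≠ x := fun h => hxp (h ▸ hvp)
        simp [pairSub, singleSub, h1]
    refine ⟨hx, hx', fun h => absurd h hne, ?_, ?_⟩
    · intro p hp
      rcases subst_eq p (hnodep p (Set.mem_union_left _ hp)) with h | h <;> rw [h]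
      · exact hv''.2.1 p hp
      · exact hvo.2.1 p hp
    · intro p hp
      rcases subst_eq p (hnodep p (Set.mem_union_right _ hp)) with h | h <;> rw [h]
      · exact hv''.2.2 p hp
      · exact hvo.2.2 p hp
  exact ⟨fun _ => key o' hv', fun _ => key o hv⟩
end
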